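/- Let I = S ⊔ T be a decomposition of a finite set into disjoint subsets, and let Δ_{S,T} be the linear map from the free ℚ-vector space on permutations of I to the tensor product of the free ℚ-vector spaces on permutations of S and on permutations of T, determined on basis elements by τ ↦ τ|_S ⊗ τ|_T. Then for every permutation σ of I: Δ_{S,T}(p_σ) = p_{σ|_S} ⊗ p_{σ|_T} if every σ-orbit is contained in S or in T (equivalently, σ|_S ⊎ σ|_T = σ), and Δ_{S,T}(p_σ) = 0 otherwise. -/

import Mathlib

/-!
STATEMENT 12: Let `I = S ⊔ T` and let `Δ_{S,T}` be the linear map determined on basis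
permutations by `τ ↦ τ|_S ⊗ τ|_T` (first-return restrictions).  Then for a permutation
`σ` of `I`: if every `σ`-orbit is contained in `S` or in `T`, then
`Δ_{S,T}(p_σ) = p_{σ|_S} ⊗ p_{σ|_T}`, and otherwise `Δ_{S,T}(p_σ) = 0`.  Here `p_σ` is
the powersum element associated with a Möbius function `μ̈` of the restriction order,
permutations of a finite subset of `α` are encoded as permutations of `α` fixing the
complement pointwise, and free vector spaces as `Equiv.Perm α →₀ ℚ`.
-/

open scoped Classical TensorProduct

variable {α : Type*} [Fintype α] [DecidableEq α]

set_option linter.unusedSectionVars false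

/-- For `a ∈ S`, there is `k ≥ 1` with `σ^k a ∈ S` (the orbit of `a` returns to `S`). -/
lemma exists_return (σ : Equiv.Perm α) (S : Finset α) {a : α} (ha : a ∈ S) :
    ∃ k : ℕ, 0 < k ∧ (σ ^ k) a ∈ S :=
  ⟨orderOf σ, orderOf_pos σ, by rw [pow_orderOf_eq_one]; simpa using ha⟩

/-- The first-return map of `σ` to `S`, as a function on `α`: a point `a ∈ S` is sent to
`σ^k a` where `k ≥ 1` is minimal with `σ^k a ∈ S`, and points outside `S` are fixed. -/
def frFun (σ : Equiv.Perm α) (S : Finset α) (a : α) : α :=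
  if h : a ∈ S then (σ ^ Nat.find (exists_return σ S h)) a else a

lemma frFun_mem (σ : Equiv.Perm α) (S : Finset α) {a : α} (ha : a ∈ S) :
    frFun σ S a ∈ S := by
  rw [frFun, dif_pos ha]
  exact (Nat.find_spec (exists_return σ S ha)).2

private lemma frFun_inj_aux (σ : Equiv.Perm α) (S : Finset α) {a b : α}
    (ha : a ∈ S) (hb : b ∈ S)
    (hle : Nat.find (exists_return σ S ha) ≤ Nat.find (exists_return σ S hb))
    (hab : (σ ^ Nat.find (exists_return σ S ha)) a
          = (σ ^ Nat.find (exists_return σ S hb)) b) :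
    a = b := by
  set ka := Nat.find (exists_return σ S ha) with hka
  set kb := Nat.find (exists_return σ S hb) with hkb
  have hk : kb = ka + (kb - ka) := by omega
  have h1 : (σ ^ ka) a = (σ ^ ka) ((σ ^ (kb - ka)) b) := by
    rw [hab]
    conv_lhs => rw [hk]
    rw [pow_add, Equiv.Perm.mul_apply]
  have h2 : a = (σ ^ (kb - ka)) b := (σ ^ ka).injective h1
  rcases Nat.eq_zero_or_pos (kb - ka) with h0 | h0
  · rw [h0, pow_zero] at h2
    simpa using h2
  · exfalso
    have hlt : kb - ka < kb := by
      have hka0 : 0 < ka := (Nat.find_spec (exists_return σ S ha)).1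
      omega
    have := Nat.find_min (exists_return σ S hb) hlt
    exact this ⟨h0, h2 ▸ ha⟩

lemma frFun_injective (σ : Equiv.Perm α) (S : Finset α) :
    Function.Injective (frFun σ S) := by
  intro a b hab
  by_cases ha : a ∈ S <;> by_cases hb : b ∈ S
  · rw [frFun, dif_pos ha, frFun, dif_pos hb] at hab
    rcases le_total (Nat.find (exists_return σ S ha)) (Nat.find (exists_return σ S hb))
      with h | h
    · exact frFun_inj_aux σ S ha hb h hab
    · exact (frFun_inj_aux σ S hb ha h hab.symm).symm
  · exfalso
    have := frFun_mem σ S ha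
    rw [hab, frFun, dif_neg hb] at this
    exact hb this
  · exfalso
    have := frFun_mem σ S hb
    rw [← hab, frFun, dif_neg ha] at this
    exact ha this
  · rwa [frFun, dif_neg ha, frFun, dif_neg hb] at hab

/-- The induced (first-return) permutation `σ|_S` of `σ` on `S`, extended by the identity
outside of `S`. -/
noncomputable def frPerm (σ : Equiv.Perm α) (S : Finset α) : Equiv.Perm α :=
  Equiv.ofBijective (frFun σ S)
    ((Finite.injective_iff_bijective).mp (frFun_injective σ S))


/-- The restriction order on permutations: `RestrLE τ σ` holds iff every `τ`-orbit is
contained in a `σ`-orbit and `τ` acts on each of its orbits as the first-return map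
of `σ`. -/
def RestrLE (τ σ : Equiv.Perm α) : Prop :=
  (∀ a b : α, τ.SameCycle a b → σ.SameCycle a b) ∧
  ∀ a : α, ∃ k : ℕ, 0 < k ∧ τ a = (σ ^ k) a ∧
    ∀ j : ℕ, 0 < j → j < k → ¬ τ.SameCycle a ((σ ^ j) a)

/-- The powersum element `p_σ = Σ_{τ ≤ σ} μ̈(τ, σ) · τ` in the free vector space on
permutations, for a given Möbius function `mu` of the restriction order. -/
noncomputable def powersum (mu : Equiv.Perm α → Equiv.Perm α → ℚ) (σ : Equiv.Perm α) :
    Equiv.Perm α →₀ ℚ :=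
  ∑ τ ∈ Finset.univ.filter (fun τ => RestrLE τ σ), Finsupp.single τ (mu τ σ)

/-- The coproduct `Δ_{S,T}`: the linear map determined on basis permutations by
`τ ↦ τ|_S ⊗ τ|_T`, where `τ|_S` is the induced (first-return) permutation. -/
noncomputable def DeltaST (S T : Finset α) (p : Equiv.Perm α →₀ ℚ) :
    (Equiv.Perm α →₀ ℚ) ⊗[ℚ] (Equiv.Perm α →₀ ℚ) :=
  p.sum fun τ c =>
    c • (Finsupp.single (frPerm τ S) (1 : ℚ) ⊗ₜ[ℚ] Finsupp.single (frPerm τ T) (1 : ℚ))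

/-- Shortcut instance: the zero of the tensor product (definitionally the one coming from
its additive monoid structure); stated to help instance synthesis. -/
noncomputable instance :
    Zero ((Equiv.Perm α →₀ ℚ) ⊗[ℚ] (Equiv.Perm α →₀ ℚ)) := AddMonoid.toZero


/-!
Write `π τ = τ|_S ⊎ τ|_T`. On permutations supported in `S ∪ T`, `π` is a kernel operator of
the restriction order: `π τ ≤ τ`, `π` is monotone, and `u ≤ π τ ↔ u ≤ τ ∧ π u = u`.

If `σ` splits (`π σ = σ`), restriction is an isomorphism of intervals
`[τ, σ] ≅ [τ|_S, σ|_S] × [τ|_T, σ|_T]`, so `μ̈` is multiplicative and `Δ_{S,T}(p_σ)` factors.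
If `σ` does not split, `Δ_{S,T}(τ)` only depends on `π τ`, and the `μ̈(·, σ)`-weight of every
fibre of `π` vanishes: on the interval below `π σ` the fibre sums satisfy the Möbius recursion
with top value `∑_{[π σ, σ]} μ̈(·, σ) = 0` (Weisner's argument).
-/

section Development

open Finset
open Equiv.Perm (SameCycle sameCycle_apply_right sameCycle_pow_right mem_support notMem_support
  pow_apply_eq_self_of_apply_eq_self)

variable {σ τ υ : Equiv.Perm α} {S T : Finset α} {a b : α}

def IsFirstReturn (σ : Equiv.Perm α) (P : α → Prop) (a : α) (k : ℕ) : Prop :=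
  0 < k ∧ P ((σ ^ k) a) ∧ ∀ i, 0 < i → i < k → ¬ P ((σ ^ i) a)

lemma exists_isFirstReturn (σ : Equiv.Perm α) {P : α → Prop} (ha : P a) :
    ∃ k, IsFirstReturn σ P a k := by
  have hex : ∃ k, 0 < k ∧ P ((σ ^ k) a) :=
    ⟨orderOf σ, orderOf_pos σ, by rwa [pow_orderOf_eq_one]⟩
  exact ⟨Nat.find hex, (Nat.find_spec hex).1, (Nat.find_spec hex).2,
    fun i hi hik hP => Nat.find_min hex hik ⟨hi, hP⟩⟩

lemma IsFirstReturn.unique {P : α → Prop} {k l : ℕ} (hk : IsFirstReturn σ P a k)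
    (hl : IsFirstReturn σ P a l) : k = l := by
  by_contra hne
  rcases Nat.lt_or_gt_of_ne hne with h | h
  · exact hl.2.2 k hk.1 h hk.2.1
  · exact hk.2.2 l hl.1 h hl.2.1

lemma isFirstReturn_congr {P Q : α → Prop} {k : ℕ} (h : ∀ i, P ((σ ^ i) a) ↔ Q ((σ ^ i) a)) :
    IsFirstReturn σ P a k ↔ IsFirstReturn σ Q a k := by
  simp only [IsFirstReturn, h]

lemma sameCycle_iff_exists_pow_apply_eq : σ.SameCycle a b ↔ ∃ n : ℕ, (σ ^ n) a = b :=
  ⟨SameCycle.exists_nat_pow_eq, fun ⟨_, hn⟩ => hn ▸ sameCycle_pow_right.2 .rfl⟩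

lemma sameCycle_congr {σ' : Equiv.Perm α} (h : ∀ n : ℕ, (σ ^ n) a = (σ' ^ n) a) :
    σ.SameCycle a b ↔ σ'.SameCycle a b := by
  simp only [sameCycle_iff_exists_pow_apply_eq, h]

lemma pow_mul_apply_of_apply_eq_self (hστ : Commute σ τ) (ha : τ a = a) (n : ℕ) :
    ((σ * τ) ^ n) a = (σ ^ n) a := by
  rw [hστ.mul_pow, Equiv.Perm.mul_apply, pow_apply_eq_self_of_apply_eq_self ha]

lemma apply_eq_self_of_support_subset (hσ : σ.support ⊆ S) (ha : a ∉ S) : σ a = a :=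
  notMem_support.1 fun h => ha (hσ h)

lemma apply_mem_of_support_subset (hσ : σ.support ⊆ S) (ha : a ∈ S) : σ a ∈ S := by
  by_cases h : a ∈ σ.support
  · exact hσ (Equiv.Perm.apply_mem_support.2 h)
  · rwa [notMem_support.1 h]

lemma commute_of_support_subset (hST : Disjoint S T) (hσ : σ.support ⊆ S)
    (hτ : τ.support ⊆ T) : Commute σ τ :=
  (Equiv.Perm.disjoint_iff_disjoint_support.2 (hST.mono hσ hτ)).commute

/-- The condition at `a` in the definition of `RestrLE`; it only depends on the iterates of
`τ` and `σ` at `a`. -/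
def RestrLEAt (τ σ : Equiv.Perm α) (a : α) : Prop :=
  (∀ b, τ.SameCycle a b → σ.SameCycle a b) ∧
    ∃ k, IsFirstReturn σ (τ.SameCycle a) a k ∧ (σ ^ k) a = τ a

lemma restrLE_iff_forall_restrLEAt : RestrLE τ σ ↔ ∀ a, RestrLEAt τ σ a := by
  simp only [RestrLE, RestrLEAt, IsFirstReturn, forall_and]
  refine and_congr Iff.rfl (forall_congr' fun a => exists_congr fun k => ?_)
  constructor
  · rintro ⟨hk, heq, hmin⟩
    exact ⟨⟨hk, heq ▸ sameCycle_apply_right.2 .rfl, hmin⟩, heq.symm⟩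
  · rintro ⟨⟨hk, -, hmin⟩, heq⟩
    exact ⟨hk, heq.symm, hmin⟩

lemma restrLEAt_congr {τ' σ' : Equiv.Perm α} (hτ : ∀ n : ℕ, (τ ^ n) a = (τ' ^ n) a)
    (hσ : ∀ n : ℕ, (σ ^ n) a = (σ' ^ n) a) : RestrLEAt τ σ a ↔ RestrLEAt τ' σ' a := by
  have h₁ : τ a = τ' a := by simpa using hτ 1
  simp only [RestrLEAt, IsFirstReturn, sameCycle_congr hτ, sameCycle_congr hσ, hσ, h₁]

lemma restrLEAt_of_apply_eq_self (h : τ a = a) : RestrLEAt τ σ a := by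
  have horb : ∀ {b}, τ.SameCycle a b → b = a := fun hb => (hb.eq_of_left h).symm
  obtain ⟨k, hk⟩ := exists_isFirstReturn σ (SameCycle.rfl : τ.SameCycle a a)
  exact ⟨fun b hb => horb hb ▸ .rfl, k, hk, by rw [horb hk.2.1, h]⟩

lemma RestrLE.refl (σ : Equiv.Perm α) : RestrLE σ σ :=
  restrLE_iff_forall_restrLEAt.2 fun _ =>
    ⟨fun _ => id, 1, ⟨one_pos, by rw [pow_one]; exact sameCycle_apply_right.2 .rfl,
      fun _ _ _ => by omega⟩, pow_one σ ▸ rfl⟩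

lemma restrLE_one (σ : Equiv.Perm α) : RestrLE 1 σ :=
  restrLE_iff_forall_restrLEAt.2 fun _ => restrLEAt_of_apply_eq_self rfl

lemma RestrLE.support_subset (h : RestrLE τ σ) : τ.support ⊆ σ.support := fun a ha => by
  rw [mem_support] at ha ⊢
  exact fun hσa => ha ((h.1 a (τ a) (sameCycle_apply_right.2 .rfl)).eq_of_left hσa).symm

lemma RestrLE.antisymm (h : RestrLE τ σ) (h' : RestrLE σ τ) : τ = σ := by
  ext a
  obtain ⟨k, hk, hτa, hmin⟩ := h.2 a
  obtain rfl | hk1 : k = 1 ∨ 1 < k := by omega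
  · rw [hτa, pow_one]
  · exact absurd (h'.1 a (σ a) (sameCycle_apply_right.2 .rfl)) (by simpa using hmin 1 one_pos hk1)

/-- If `τ ≤ σ`, the `σ`-iterates of `a` lying in the `τ`-orbit of `a` are, in order, the
`τ`-iterates of `a`. -/
lemma RestrLE.exists_pow_apply_eq (h : RestrLE τ σ) (a : α) (j : ℕ) :
    ∃ k, j ≤ k ∧ (σ ^ k) a = (τ ^ j) a ∧
      ∀ i, 0 < i → i ≤ k → τ.SameCycle a ((σ ^ i) a) →
        ∃ j', 0 < j' ∧ j' ≤ j ∧ (σ ^ i) a = (τ ^ j') a := by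
  induction j with
  | zero => exact ⟨0, le_rfl, by simp, fun i hi hik _ => absurd hik (by omega)⟩
  | succ j ih =>
    obtain ⟨k, hjk, hk, hvisit⟩ := ih
    obtain ⟨m, hm, hτ, hmin⟩ := h.2 ((τ ^ j) a)
    have hstep : (σ ^ (m + k)) a = (τ ^ (j + 1)) a := by
      rw [pow_add, Equiv.Perm.mul_apply, hk, ← hτ, pow_succ', Equiv.Perm.mul_apply]
    refine ⟨m + k, by omega, hstep, fun i hi hik hsc => ?_⟩
    rcases le_or_gt i k with hik' | hki
    · obtain ⟨j', hj', hj'j, heq⟩ := hvisit i hi hik' hsc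
      exact ⟨j', hj', by omega, heq⟩
    · have hi_eq : (σ ^ i) a = (σ ^ (i - k)) ((τ ^ j) a) := by
        rw [← hk, ← Equiv.Perm.mul_apply, ← pow_add, Nat.sub_add_cancel hki.le]
      obtain rfl : i = m + k := by
        by_contra hne
        refine hmin (i - k) (by omega) (by omega) ?_
        rw [← hi_eq]
        exact (sameCycle_pow_right.2 .rfl).symm.trans hsc
      exact ⟨j + 1, by omega, le_rfl, hstep⟩

lemma RestrLE.pow_apply_eq_of_isFirstReturn (h : RestrLE τ σ) {P : α → Prop}
    (hP : ∀ b, P b → τ.SameCycle a b) {j k : ℕ} (hj : IsFirstReturn τ P a j)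
    (hk : IsFirstReturn σ P a k) : (σ ^ k) a = (τ ^ j) a := by
  obtain ⟨K, hjK, hK, hvisit⟩ := h.exists_pow_apply_eq a j
  have hkK : k ≤ K := by
    by_contra! hKk
    exact hk.2.2 K (by have := hj.1; omega) hKk (hK ▸ hj.2.1)
  obtain ⟨j', hj', hj'j, heq⟩ := hvisit k hk.1 hkK (hP _ hk.2.1)
  obtain rfl : j' = j := by
    by_contra hne
    exact hj.2.2 j' hj' (lt_of_le_of_ne hj'j hne) (heq ▸ hk.2.1)
  exact heq

lemma RestrLE.trans (h₁ : RestrLE υ τ) (h₂ : RestrLE τ σ) : RestrLE υ σ := by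
  refine restrLE_iff_forall_restrLEAt.2 fun a => ⟨fun b hb => h₂.1 a b (h₁.1 a b hb), ?_⟩
  obtain ⟨-, j, hj, hυa⟩ := restrLE_iff_forall_restrLEAt.1 h₁ a
  obtain ⟨k, hk⟩ := exists_isFirstReturn σ (SameCycle.rfl : υ.SameCycle a a)
  exact ⟨k, hk, (h₂.pow_apply_eq_of_isFirstReturn (fun b hb => h₁.1 a b hb) hj hk).trans hυa⟩

lemma frPerm_apply_of_notMem (ha : a ∉ S) : frPerm σ S a = a := dif_neg ha

lemma frPerm_apply_mem (ha : a ∈ S) : frPerm σ S a ∈ S := frFun_mem σ S ha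

lemma support_frPerm_subset : (frPerm σ S).support ⊆ S := fun _ ha =>
  by_contra fun h => mem_support.1 ha (frPerm_apply_of_notMem h)

lemma exists_isFirstReturn_frPerm_apply (ha : a ∈ S) :
    ∃ k, IsFirstReturn σ (· ∈ S) a k ∧ frPerm σ S a = (σ ^ k) a :=
  have hex := exists_return σ S ha
  ⟨Nat.find hex, ⟨(Nat.find_spec hex).1, (Nat.find_spec hex).2,
    fun _ hi hik hS => Nat.find_min hex hik ⟨hi, hS⟩⟩, dif_pos ha⟩

lemma frPerm_apply_of_isFirstReturn (ha : a ∈ S) {k : ℕ} (hk : IsFirstReturn σ (· ∈ S) a k) :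
    frPerm σ S a = (σ ^ k) a := by
  obtain ⟨l, hl, hfr⟩ := exists_isFirstReturn_frPerm_apply (σ := σ) ha
  rw [hfr, hl.unique hk]

lemma frPerm_apply_of_apply_mem (ha : a ∈ S) (hσa : σ a ∈ S) : frPerm σ S a = σ a := by
  rw [frPerm_apply_of_isFirstReturn ha (k := 1) ⟨one_pos, by rwa [pow_one], by omega⟩, pow_one]

lemma sameCycle_frPerm_apply (σ : Equiv.Perm α) (S : Finset α) (a : α) :
    σ.SameCycle a (frPerm σ S a) := by
  by_cases ha : a ∈ S
  · obtain ⟨k, -, hfr⟩ := exists_isFirstReturn_frPerm_apply (σ := σ) ha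
    rw [hfr]
    exact sameCycle_pow_right.2 .rfl
  · rw [frPerm_apply_of_notMem ha]

lemma sameCycle_frPerm_iff (ha : a ∈ S) :
    (frPerm σ S).SameCycle a b ↔ b ∈ S ∧ σ.SameCycle a b := by
  constructor
  · intro h
    obtain ⟨n, rfl⟩ := h.exists_nat_pow_eq
    clear h
    induction n with
    | zero => exact ⟨ha, .rfl⟩
    | succ n ih =>
      rw [pow_succ', Equiv.Perm.mul_apply]
      exact ⟨frPerm_apply_mem ih.1, ih.2.trans (sameCycle_frPerm_apply σ S _)⟩
  · rintro ⟨hb, hab⟩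
    obtain ⟨n, rfl⟩ := hab.exists_nat_pow_eq
    clear hab
    induction n using Nat.strong_induction_on generalizing a with
    | _ n ih =>
      obtain rfl | hn := Nat.eq_zero_or_pos n
      · exact .rfl
      -- step to the first return `frPerm σ S a = σ ^ k a`, then use induction from there
      obtain ⟨k, hk, hfr⟩ := exists_isFirstReturn_frPerm_apply (σ := σ) ha
      have hkn : k ≤ n := by
        by_contra! h
        exact hk.2.2 n hn h hb
      have hsplit : (σ ^ n) a = (σ ^ (n - k)) (frPerm σ S a) := by
        rw [hfr, ← Equiv.Perm.mul_apply, ← pow_add, Nat.sub_add_cancel hkn]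
      rw [hsplit] at hb ⊢
      exact (sameCycle_apply_right.2 .rfl).trans
        (ih (n - k) (by have := hk.1; omega) (frPerm_apply_mem ha) hb)

lemma frPerm_le (σ : Equiv.Perm α) (S : Finset α) : RestrLE (frPerm σ S) σ := by
  refine restrLE_iff_forall_restrLEAt.2 fun a => ?_
  by_cases ha : a ∈ S
  · obtain ⟨k, hk, hfr⟩ := exists_isFirstReturn_frPerm_apply (σ := σ) ha
    refine ⟨fun b hb => ((sameCycle_frPerm_iff ha).1 hb).2, k, ?_, hfr.symm⟩
    refine (isFirstReturn_congr fun i => ?_).1 hk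
    rw [sameCycle_frPerm_iff ha]
    exact (and_iff_left (sameCycle_pow_right.2 .rfl)).symm
  · exact restrLEAt_of_apply_eq_self (frPerm_apply_of_notMem ha)

lemma frPerm_one (S : Finset α) : frPerm 1 S = 1 :=
  (frPerm_le 1 S).antisymm (restrLE_one _)

lemma frPerm_mono (h : RestrLE τ σ) (S : Finset α) : RestrLE (frPerm τ S) (frPerm σ S) := by
  refine restrLE_iff_forall_restrLEAt.2 fun a => ?_
  by_cases ha : a ∈ S
  swap
  · exact restrLEAt_of_apply_eq_self (frPerm_apply_of_notMem ha)
  have horb : ∀ b, (frPerm τ S).SameCycle a b → (frPerm σ S).SameCycle a b := fun b hb => by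
    rw [sameCycle_frPerm_iff ha] at hb ⊢
    exact ⟨hb.1, h.1 a b hb.2⟩
  refine ⟨horb, ?_⟩
  obtain ⟨j, hj, hτa⟩ := exists_isFirstReturn_frPerm_apply (σ := τ) ha
  replace hj : IsFirstReturn τ ((frPerm τ S).SameCycle a) a j :=
    (isFirstReturn_congr fun i => by
      rw [sameCycle_frPerm_iff ha]
      exact (and_iff_left (sameCycle_pow_right.2 .rfl)).symm).1 hj
  obtain ⟨k, hk⟩ := exists_isFirstReturn (frPerm σ S) (SameCycle.rfl : (frPerm τ S).SameCycle a a)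
  obtain ⟨l, hl⟩ := exists_isFirstReturn σ (SameCycle.rfl : (frPerm τ S).SameCycle a a)
  -- compare both sides with the first return of `σ` itself to the `τ|_S`-orbit of `a`
  refine ⟨k, hk, ?_⟩
  calc ((frPerm σ S) ^ k) a = (σ ^ l) a :=
        ((frPerm_le σ S).pow_apply_eq_of_isFirstReturn horb hk hl).symm
    _ = (τ ^ j) a :=
        h.pow_apply_eq_of_isFirstReturn (fun b hb => ((sameCycle_frPerm_iff ha).1 hb).2) hj hl
    _ = frPerm τ S a := hτa.symm

/-- `σ|_S ⊎ σ|_T`. -/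
noncomputable def splitPerm (S T : Finset α) (σ : Equiv.Perm α) : Equiv.Perm α :=
  frPerm σ S * frPerm σ T

def Splits (S T : Finset α) (σ : Equiv.Perm α) : Prop :=
  ∀ a b : α, σ.SameCycle a b → (a ∈ S → b ∈ S) ∧ (a ∈ T → b ∈ T)

lemma Splits.of_restrLE (h : Splits S T σ) (hτ : RestrLE τ σ) : Splits S T τ :=
  fun a b hab => h a b (hτ.1 a b hab)

lemma splitPerm_comm (hST : Disjoint S T) (σ : Equiv.Perm α) :
    splitPerm S T σ = splitPerm T S σ :=
  (commute_of_support_subset hST support_frPerm_subset support_frPerm_subset).eq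

lemma pow_splitPerm_apply_of_mem (hST : Disjoint S T) (ha : a ∈ S) (n : ℕ) :
    ((splitPerm S T σ) ^ n) a = ((frPerm σ S) ^ n) a :=
  pow_mul_apply_of_apply_eq_self
    (commute_of_support_subset hST support_frPerm_subset support_frPerm_subset)
    (frPerm_apply_of_notMem (disjoint_left.1 hST ha)) n

lemma splitPerm_apply_of_notMem (haS : a ∉ S) (haT : a ∉ T) : splitPerm S T σ a = a := by
  rw [splitPerm, Equiv.Perm.mul_apply, frPerm_apply_of_notMem haT, frPerm_apply_of_notMem haS]

lemma support_splitPerm_subset : (splitPerm S T σ).support ⊆ S ∪ T :=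
  (Equiv.Perm.support_mul_le _ _).trans
    (union_subset_union support_frPerm_subset support_frPerm_subset)

lemma sameCycle_splitPerm_iff (hST : Disjoint S T) (ha : a ∈ S) :
    (splitPerm S T σ).SameCycle a b ↔ b ∈ S ∧ σ.SameCycle a b := by
  rw [sameCycle_congr (pow_splitPerm_apply_of_mem hST ha), sameCycle_frPerm_iff ha]

lemma splits_splitPerm (hST : Disjoint S T) (σ : Equiv.Perm α) : Splits S T (splitPerm S T σ) := by
  intro a b hab
  by_cases haS : a ∈ S
  · exact ⟨fun _ => ((sameCycle_splitPerm_iff hST haS).1 hab).1,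
      fun haT => absurd haT (disjoint_left.1 hST haS)⟩
  by_cases haT : a ∈ T
  · rw [splitPerm_comm hST] at hab
    exact ⟨fun h => absurd h haS, fun _ => ((sameCycle_splitPerm_iff hST.symm haT).1 hab).1⟩
  · obtain rfl := hab.eq_of_left (splitPerm_apply_of_notMem haS haT)
    exact ⟨id, id⟩

lemma splitPerm_le (hST : Disjoint S T) (σ : Equiv.Perm α) : RestrLE (splitPerm S T σ) σ := by
  refine restrLE_iff_forall_restrLEAt.2 fun a => ?_
  by_cases haS : a ∈ S
  · exact (restrLEAt_congr (pow_splitPerm_apply_of_mem hST haS) fun _ => rfl).2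
      (restrLE_iff_forall_restrLEAt.1 (frPerm_le σ S) a)
  by_cases haT : a ∈ T
  · rw [splitPerm_comm hST]
    exact (restrLEAt_congr (pow_splitPerm_apply_of_mem hST.symm haT) fun _ => rfl).2
      (restrLE_iff_forall_restrLEAt.1 (frPerm_le σ T) a)
  · exact restrLEAt_of_apply_eq_self (splitPerm_apply_of_notMem haS haT)

lemma restrLEAt_mul_of_apply_eq_self {f f' g g' : Equiv.Perm α} (hfg : Commute f g)
    (hfg' : Commute f' g') (hga : g a = a) (hga' : g' a = a) (h : RestrLEAt f' f a) :
    RestrLEAt (f' * g') (f * g) a :=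
  (restrLEAt_congr (pow_mul_apply_of_apply_eq_self hfg' hga')
    (pow_mul_apply_of_apply_eq_self hfg hga)).2 h

lemma RestrLE.mul (hST : Disjoint S T) {f f' g g' : Equiv.Perm α} (hfS : f.support ⊆ S)
    (hgT : g.support ⊆ T) (hf : RestrLE f' f) (hg : RestrLE g' g) : RestrLE (f' * g') (f * g) := by
  have hf'S := hf.support_subset.trans hfS
  have hg'T := hg.support_subset.trans hgT
  have hfg := commute_of_support_subset hST hfS hgT
  have hfg' := commute_of_support_subset hST hf'S hg'T
  refine restrLE_iff_forall_restrLEAt.2 fun a => ?_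
  by_cases haS : a ∈ S
  · have haT := disjoint_left.1 hST haS
    exact restrLEAt_mul_of_apply_eq_self hfg hfg' (apply_eq_self_of_support_subset hgT haT)
      (apply_eq_self_of_support_subset hg'T haT) (restrLE_iff_forall_restrLEAt.1 hf a)
  by_cases haT : a ∈ T
  · rw [hfg.eq, hfg'.eq]
    exact restrLEAt_mul_of_apply_eq_self hfg.symm hfg'.symm
      (apply_eq_self_of_support_subset hfS haS) (apply_eq_self_of_support_subset hf'S haS)
      (restrLE_iff_forall_restrLEAt.1 hg a)
  · refine restrLEAt_of_apply_eq_self ?_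
    rw [Equiv.Perm.mul_apply, apply_eq_self_of_support_subset hg'T haT,
      apply_eq_self_of_support_subset hf'S haS]

lemma splitPerm_mono (hST : Disjoint S T) (h : RestrLE τ σ) :
    RestrLE (splitPerm S T τ) (splitPerm S T σ) :=
  (frPerm_mono h S).mul hST support_frPerm_subset support_frPerm_subset (frPerm_mono h T)

lemma frPerm_mul_left (hST : Disjoint S T) {f g : Equiv.Perm α} (hfS : f.support ⊆ S)
    (hgT : g.support ⊆ T) : frPerm (f * g) S = f := by
  ext a
  by_cases ha : a ∈ S
  · have hga : g a = a := apply_eq_self_of_support_subset hgT (disjoint_left.1 hST ha)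
    have hfga : (f * g) a = f a := by rw [Equiv.Perm.mul_apply, hga]
    rw [frPerm_apply_of_apply_mem ha (hfga ▸ apply_mem_of_support_subset hfS ha), hfga]
  · rw [frPerm_apply_of_notMem ha, apply_eq_self_of_support_subset hfS ha]

lemma frPerm_mul_right (hST : Disjoint S T) {f g : Equiv.Perm α} (hfS : f.support ⊆ S)
    (hgT : g.support ⊆ T) : frPerm (f * g) T = g := by
  rw [(commute_of_support_subset hST hfS hgT).eq, frPerm_mul_left hST.symm hgT hfS]

lemma frPerm_splitPerm_left (hST : Disjoint S T) : frPerm (splitPerm S T σ) S = frPerm σ S :=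
  frPerm_mul_left hST support_frPerm_subset support_frPerm_subset

lemma frPerm_splitPerm_right (hST : Disjoint S T) : frPerm (splitPerm S T σ) T = frPerm σ T :=
  frPerm_mul_right hST support_frPerm_subset support_frPerm_subset

lemma splitPerm_eq_self (hST : Disjoint S T) (h : Splits S T σ) (hσ : σ.support ⊆ S ∪ T) :
    splitPerm S T σ = σ := by
  ext a
  by_cases haS : a ∈ S
  · rw [← pow_one (splitPerm S T σ), pow_splitPerm_apply_of_mem hST haS, pow_one,
      frPerm_apply_of_apply_mem haS ((h a _ (sameCycle_apply_right.2 .rfl)).1 haS)]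
  by_cases haT : a ∈ T
  · rw [splitPerm_comm hST, ← pow_one (splitPerm T S σ), pow_splitPerm_apply_of_mem hST.symm haT,
      pow_one, frPerm_apply_of_apply_mem haT ((h a _ (sameCycle_apply_right.2 .rfl)).2 haT)]
  · rw [splitPerm_apply_of_notMem haS haT,
      apply_eq_self_of_support_subset hσ (by simp [haS, haT])]

lemma splitPerm_eq_self_of_restrLE (hST : Disjoint S T) (h : RestrLE υ (splitPerm S T σ)) :
    splitPerm S T υ = υ :=
  splitPerm_eq_self hST ((splits_splitPerm hST σ).of_restrLE h)
    (h.support_subset.trans support_splitPerm_subset)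

lemma restrLE_splitPerm_iff (hST : Disjoint S T) :
    RestrLE υ (splitPerm S T σ) ↔ RestrLE υ σ ∧ splitPerm S T υ = υ := by
  refine ⟨fun h => ⟨h.trans (splitPerm_le hST σ), splitPerm_eq_self_of_restrLE hST h⟩, ?_⟩
  rintro ⟨h, hυ⟩
  rw [← hυ]
  exact splitPerm_mono hST h

noncomputable def restrIcc (τ σ : Equiv.Perm α) : Finset (Equiv.Perm α) :=
  univ.filter fun ρ => RestrLE τ ρ ∧ RestrLE ρ σ

@[simp]
lemma mem_restrIcc {ρ : Equiv.Perm α} : ρ ∈ restrIcc τ σ ↔ RestrLE τ ρ ∧ RestrLE ρ σ := by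
  simp [restrIcc]

lemma restrIcc_one (σ : Equiv.Perm α) : restrIcc 1 σ = univ.filter (RestrLE · σ) := by
  ext
  simp [restrLE_one]

lemma wellFounded_restrLT : WellFounded fun ρ τ : Equiv.Perm α => RestrLE τ ρ ∧ ρ ≠ τ := by
  have : IsTrans (Equiv.Perm α) fun ρ τ => RestrLE τ ρ ∧ ρ ≠ τ :=
    ⟨fun _ _ _ hab hbc => ⟨hbc.1.trans hab.1, fun hac => hab.2 (hab.1.antisymm (hac ▸ hbc.1)).symm⟩⟩
  have : Std.Irrefl fun ρ τ : Equiv.Perm α => RestrLE τ ρ ∧ ρ ≠ τ := ⟨fun _ h => h.2 rfl⟩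
  exact Finite.wellFounded_of_trans_of_irrefl _

lemma eq_zero_of_sum_restrIcc_eq_zero {M : Type*} [AddCommGroup M] {f : Equiv.Perm α → M}
    (htop : f σ = 0) (hsum : ∀ τ, RestrLE τ σ → τ ≠ σ → ∑ ρ ∈ restrIcc τ σ, f ρ = 0)
    (hτ : RestrLE τ σ) : f τ = 0 := by
  refine wellFounded_restrLT.induction (C := fun τ => RestrLE τ σ → f τ = 0) τ
    (fun τ ih hτ => ?_) hτ
  obtain rfl | hne := eq_or_ne τ σ
  · exact htop
  have h := hsum τ hτ hne
  rwa [← add_sum_erase _ _ (mem_restrIcc.2 ⟨.refl τ, hτ⟩), sum_eq_zero, add_zero] at h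
  intro ρ hρ
  obtain ⟨hρτ, hτρ, hρσ⟩ : ρ ≠ τ ∧ RestrLE τ ρ ∧ RestrLE ρ σ := by simpa using hρ
  exact ih ρ ⟨hτρ, hρτ⟩ hρσ

lemma sum_restrIcc_eq_sum_restrIcc_frPerm (hST : Disjoint S T) (hσ : splitPerm S T σ = σ)
    (hτ : RestrLE τ σ) {M : Type*} [AddCommMonoid M] (F : Equiv.Perm α → Equiv.Perm α → M) :
    ∑ ρ ∈ restrIcc τ σ, F (frPerm ρ S) (frPerm ρ T) =
      ∑ ρ₁ ∈ restrIcc (frPerm τ S) (frPerm σ S), ∑ ρ₂ ∈ restrIcc (frPerm τ T) (frPerm σ T),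
        F ρ₁ ρ₂ := by
  rw [← sum_product']
  refine sum_nbij' (fun ρ => (frPerm ρ S, frPerm ρ T)) (fun p => p.1 * p.2) ?_ ?_ ?_ ?_
    fun _ _ => rfl
  · simp only [mem_restrIcc, mem_product]
    exact fun ρ ⟨h₁, h₂⟩ =>
      ⟨⟨frPerm_mono h₁ S, frPerm_mono h₂ S⟩, frPerm_mono h₁ T, frPerm_mono h₂ T⟩
  · rintro ⟨f, g⟩ hfg
    simp only [mem_restrIcc, mem_product] at hfg ⊢
    obtain ⟨⟨hτf, hfσ⟩, hτg, hgσ⟩ := hfg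
    have hfS := hfσ.support_subset.trans support_frPerm_subset
    have hgT := hgσ.support_subset.trans support_frPerm_subset
    have hτ' : splitPerm S T τ = τ := splitPerm_eq_self_of_restrLE hST (hσ.symm ▸ hτ)
    refine ⟨hτ' ▸ hτf.mul hST hfS hgT hτg, hσ ▸ ?_⟩
    exact hfσ.mul hST support_frPerm_subset support_frPerm_subset hgσ
  · exact fun ρ hρ => splitPerm_eq_self_of_restrLE hST (hσ.symm ▸ (mem_restrIcc.1 hρ).2)
  · rintro ⟨f, g⟩ hfg
    simp only [mem_restrIcc, mem_product] at hfg
    have hfS := hfg.1.2.support_subset.trans support_frPerm_subset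
    have hgT := hfg.2.2.support_subset.trans support_frPerm_subset
    exact Prod.ext (frPerm_mul_left hST hfS hgT) (frPerm_mul_right hST hfS hgT)

lemma moebius_eq_mul_of_splitPerm_eq_self (hST : Disjoint S T) (hσ : splitPerm S T σ = σ)
    {mu : Equiv.Perm α → Equiv.Perm α → ℚ} (hmu_refl : ∀ σ, mu σ σ = 1)
    (hmu_sum : ∀ τ σ, RestrLE τ σ → τ ≠ σ → ∑ ρ ∈ restrIcc τ σ, mu ρ σ = 0) (hτ : RestrLE τ σ) :
    mu τ σ = mu (frPerm τ S) (frPerm σ S) * mu (frPerm τ T) (frPerm σ T) := by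
  refine sub_eq_zero.1 (eq_zero_of_sum_restrIcc_eq_zero
    (f := fun τ => mu τ σ - mu (frPerm τ S) (frPerm σ S) * mu (frPerm τ T) (frPerm σ T))
    (by simp [hmu_refl]) (fun τ hτ hne => ?_) hτ)
  rw [sum_sub_distrib, hmu_sum τ σ hτ hne, sum_restrIcc_eq_sum_restrIcc_frPerm hST hσ hτ
    (fun ρ₁ ρ₂ => mu ρ₁ (frPerm σ S) * mu ρ₂ (frPerm σ T)), ← sum_mul_sum, zero_sub, neg_eq_zero]
  by_cases hS : frPerm τ S = frPerm σ S
  · have hτ' : splitPerm S T τ = τ := splitPerm_eq_self_of_restrLE hST (hσ.symm ▸ hτ)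
    have hT : frPerm τ T ≠ frPerm σ T := fun hT => hne <| by
      rw [← hτ', ← hσ, splitPerm, splitPerm, hS, hT]
    rw [hmu_sum _ _ (frPerm_mono hτ T) hT, mul_zero]
  · rw [hmu_sum _ _ (frPerm_mono hτ S) hS, zero_mul]

lemma sum_moebius_fiber_splitPerm_eq_zero (hST : Disjoint S T) (hσ : splitPerm S T σ ≠ σ)
    {mu : Equiv.Perm α → Equiv.Perm α → ℚ}
    (hmu_sum : ∀ τ σ, RestrLE τ σ → τ ≠ σ → ∑ ρ ∈ restrIcc τ σ, mu ρ σ = 0)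
    {u : Equiv.Perm α} (hu : RestrLE u (splitPerm S T σ)) :
    ∑ τ ∈ univ.filter (RestrLE · σ) with splitPerm S T τ = u, mu τ σ = 0 := by
  set s := splitPerm S T σ
  have hsσ : RestrLE s σ := splitPerm_le hST σ
  refine eq_zero_of_sum_restrIcc_eq_zero (f := fun u =>
    ∑ τ ∈ univ.filter (RestrLE · σ) with splitPerm S T τ = u, mu τ σ) ?_ (fun u hu hus => ?_) hu
  · convert hmu_sum s σ hsσ hσ using 2
    ext τ
    simp only [mem_filter, mem_univ, true_and, mem_restrIcc]
    refine ⟨fun ⟨hτσ, hτs⟩ => ⟨hτs ▸ splitPerm_le hST τ, hτσ⟩, fun ⟨hsτ, hτσ⟩ => ⟨hτσ, ?_⟩⟩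
    exact (splitPerm_mono hST hτσ).antisymm
      ((restrLE_splitPerm_iff hST).2 ⟨hsτ, splitPerm_eq_self_of_restrLE hST (.refl s)⟩)
  · have huσ : u ≠ σ := fun h => hσ (hsσ.antisymm (h ▸ hu))
    rw [sum_fiberwise_eq_sum_filter, filter_filter]
    convert hmu_sum u σ (hu.trans hsσ) huσ using 2
    ext τ
    simp only [mem_filter, mem_univ, true_and, mem_restrIcc]
    have hu' := splitPerm_eq_self_of_restrLE hST hu
    refine ⟨fun ⟨hτσ, huτ, _⟩ => ⟨huτ.trans (splitPerm_le hST τ), hτσ⟩,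
      fun ⟨huτ, hτσ⟩ => ⟨hτσ, (restrLE_splitPerm_iff hST).2 ⟨huτ, hu'⟩, splitPerm_mono hST hτσ⟩⟩


/-- `Δ_{S,T}(τ) = τ|_S ⊗ τ|_T`. -/
noncomputable def restrTmul (S T : Finset α) (τ : Equiv.Perm α) :
    (Equiv.Perm α →₀ ℚ) ⊗[ℚ] (Equiv.Perm α →₀ ℚ) :=
  Finsupp.single (frPerm τ S) 1 ⊗ₜ[ℚ] Finsupp.single (frPerm τ T) 1

lemma restrTmul_splitPerm (hST : Disjoint S T) (τ : Equiv.Perm α) :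
    restrTmul S T (splitPerm S T τ) = restrTmul S T τ := by
  rw [restrTmul, frPerm_splitPerm_left hST, frPerm_splitPerm_right hST, restrTmul]

lemma DeltaST_powersum_eq_sum (S T : Finset α) (mu : Equiv.Perm α → Equiv.Perm α → ℚ)
    (σ : Equiv.Perm α) :
    DeltaST S T (powersum mu σ) = ∑ τ ∈ univ.filter (RestrLE · σ), mu τ σ • restrTmul S T τ := by
  rw [DeltaST, ← Finsupp.linearCombination_apply, powersum, map_sum]
  simp only [Finsupp.linearCombination_single, restrTmul]

lemma DeltaST_powersum_of_splitPerm_eq_self (hST : Disjoint S T) (hσ : splitPerm S T σ = σ)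
    {mu : Equiv.Perm α → Equiv.Perm α → ℚ} (hmu_refl : ∀ σ, mu σ σ = 1)
    (hmu_sum : ∀ τ σ, RestrLE τ σ → τ ≠ σ → ∑ ρ ∈ restrIcc τ σ, mu ρ σ = 0) :
    DeltaST S T (powersum mu σ) = powersum mu (frPerm σ S) ⊗ₜ[ℚ] powersum mu (frPerm σ T) := by
  set F : Equiv.Perm α → Equiv.Perm α → (Equiv.Perm α →₀ ℚ) ⊗[ℚ] (Equiv.Perm α →₀ ℚ) :=
    fun ρ₁ ρ₂ => Finsupp.single ρ₁ (mu ρ₁ (frPerm σ S)) ⊗ₜ Finsupp.single ρ₂ (mu ρ₂ (frPerm σ T))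
  have hfactor : ∀ τ ∈ restrIcc 1 σ, mu τ σ • restrTmul S T τ = F (frPerm τ S) (frPerm τ T) :=
    fun τ hτ => by
      rw [moebius_eq_mul_of_splitPerm_eq_self hST hσ hmu_refl hmu_sum (mem_restrIcc.1 hτ).2,
        restrTmul, ← TensorProduct.smul_tmul_smul, Finsupp.smul_single_one,
        Finsupp.smul_single_one]
  rw [DeltaST_powersum_eq_sum, ← restrIcc_one, sum_congr rfl hfactor,
    sum_restrIcc_eq_sum_restrIcc_frPerm hST hσ (restrLE_one σ), frPerm_one, frPerm_one,
    powersum, powersum, ← restrIcc_one, ← restrIcc_one, TensorProduct.sum_tmul]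
  simp_rw [TensorProduct.tmul_sum]
  rfl

lemma DeltaST_powersum_of_splitPerm_ne_self (hST : Disjoint S T) (hσ : splitPerm S T σ ≠ σ)
    {mu : Equiv.Perm α → Equiv.Perm α → ℚ}
    (hmu_sum : ∀ τ σ, RestrLE τ σ → τ ≠ σ → ∑ ρ ∈ restrIcc τ σ, mu ρ σ = 0) :
    DeltaST S T (powersum mu σ) = 0 := by
  rw [DeltaST_powersum_eq_sum, ← sum_fiberwise_of_maps_to (g := splitPerm S T)
    (t := univ.filter (RestrLE · (splitPerm S T σ))) fun τ hτ => by
      simpa using splitPerm_mono hST (mem_filter.1 hτ).2]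
  refine sum_eq_zero fun u hu => ?_
  have hfiber : ∀ τ, splitPerm S T τ = u → mu τ σ • restrTmul S T τ = mu τ σ • restrTmul S T u :=
    fun τ hτ => by rw [← hτ, restrTmul_splitPerm hST]
  rw [sum_congr rfl fun τ hτ => hfiber τ (mem_filter.1 hτ).2, ← sum_smul,
    sum_moebius_fiber_splitPerm_eq_zero hST hσ hmu_sum (mem_filter.1 hu).2, zero_smul]

end Development

theorem DeltaST_powersum (S T : Finset α) (hST : Disjoint S T)
    (σ : Equiv.Perm α) (hσ : ∀ a ∉ S ∪ T, σ a = a)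
    (mu : Equiv.Perm α → Equiv.Perm α → ℚ)
    (hmu_refl : ∀ σ₀ : Equiv.Perm α, mu σ₀ σ₀ = 1)
    (hmu_sum : ∀ τ σ₀ : Equiv.Perm α, RestrLE τ σ₀ → τ ≠ σ₀ →
      ∑ ρ ∈ Finset.univ.filter (fun ρ => RestrLE τ ρ ∧ RestrLE ρ σ₀), mu ρ σ₀ = 0) :
    ((∀ a b : α, σ.SameCycle a b → (a ∈ S → b ∈ S) ∧ (a ∈ T → b ∈ T)) →
        DeltaST S T (powersum mu σ)
          = (powersum mu (frPerm σ S)) ⊗ₜ[ℚ] (powersum mu (frPerm σ T))) ∧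
    ((¬ ∀ a b : α, σ.SameCycle a b → (a ∈ S → b ∈ S) ∧ (a ∈ T → b ∈ T)) →
        DeltaST S T (powersum mu σ)
          = (0 : (Equiv.Perm α →₀ ℚ) ⊗[ℚ] (Equiv.Perm α →₀ ℚ))) := by
  have hσT : σ.support ⊆ S ∪ T := fun a ha =>
    by_contra fun h => Equiv.Perm.mem_support.1 ha (hσ a h)
  refine ⟨fun hsplit => ?_, fun hsplit => ?_⟩
  · exact DeltaST_powersum_of_splitPerm_eq_self hST (splitPerm_eq_self hST hsplit hσT)
      hmu_refl hmu_sum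
  · refine DeltaST_powersum_of_splitPerm_ne_self hST (fun h => hsplit ?_) hmu_sum
    rw [← h]
    exact splits_splitPerm hST σ
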